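/- For every non-negative even integer t and every τ in the complex upper half-plane ℍ, one has ℱ_t(q)/Θ₄(τ) = (1/2)·D_ω^t[ μ(4τ + 2ω, 4τ; 8τ) ]|_{ω=0}, where the function ω ↦ μ(4τ+2ω, 4τ; 8τ) is holomorphic in ω in a neighborhood of ω = 0 and D_ω^t denotes the t-fold application of the operator (1/2πi)·d/dω, evaluated at ω = 0. -/

import Mathlib

/-!
Put `q = e^{2πiτ}`, `w = q⁴` and `z = e^{2πiω}`. The `n`-th summand of `μ(4τ + 2ω, 4τ; 8τ)` is,
for `n = m ≥ 0`, a geometric series in `w^{2m+1} z²`, and the summand of index `-(m+1)` is that of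
index `m` with `z` replaced by `z⁻¹`. Since moreover `θ(4τ; 8τ) = -q⁻¹ Θ₄(τ)`, near `ω = 0`
`μ(4τ + 2ω, 4τ; 8τ) = -(q³/Θ₄(τ)) (A(ω) + A(-ω))`, where
`A(ω) = Σ_{m,k ≥ 0} (-1)^m w^{m² + 2m + (2m+1)k} e^{2πi(2k+1)ω}`
is an absolutely convergent exponential series. Differentiating termwise, `D_ω^t A(0)` is the
same double series weighted by `(2k+1)^t`; for even `t` the two halves contribute equally, and
with `α = β + 1 + m`, `k = β` that double series is `-q⁻³ ℱ_t(q)`.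
-/

noncomputable section
open Complex Real


/-- `q = e^{2πiτ}`. -/
def nome (τ : ℂ) : ℂ := Complex.exp (2 * (π : ℂ) * I * τ)

/-- `Θ₄(τ) = 1 + 2 Σ_{n≥1} (−1)ⁿ q^{4n²}`. -/
def Theta4 (τ : ℂ) : ℂ := 1 + 2 * ∑' n : ℕ, (-1 : ℂ) ^ (n + 1) * nome τ ^ (4 * (n + 1) ^ 2)

/-- `ℱ_t(x) = Σ_{β≥0} Σ_{α≥β+1} (−1)^{α+β} (2β+1)^t x^{4α²−(2β+1)²}`, with `α = β+1+j`. -/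
def Fser (t : ℕ) (x : ℂ) : ℂ :=
  ∑' (β : ℕ) (j : ℕ), (-1 : ℂ) ^ (β + 1 + j + β) * (2 * (β : ℂ) + 1) ^ t *
    x ^ (4 * (β + 1 + j) ^ 2 - (2 * β + 1) ^ 2)

/-- Jacobi theta `θ(v;τ) = Σ_{ν∈ℤ+1/2} (−1)^{ν−1/2} e^{2πivν} q^{ν²/2}`. -/
def jtheta (v τ : ℂ) : ℂ :=
  ∑' n : ℤ, (-1 : ℂ) ^ n * Complex.exp (2 * (π : ℂ) * I * v * ((n : ℂ) + 1 / 2)) *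
    Complex.exp ((π : ℂ) * I * τ * ((n : ℂ) + 1 / 2) ^ 2)

/-- Zwegers's μ-function. -/
def mu (u v τ : ℂ) : ℂ :=
  (Complex.exp ((π : ℂ) * I * u) / jtheta v τ) *
    ∑' n : ℤ, (-Complex.exp (2 * (π : ℂ) * I * v)) ^ n * nome τ ^ ((n * (n + 1)) / 2 : ℤ) /
      (1 - Complex.exp (2 * (π : ℂ) * I * u) * nome τ ^ (n : ℤ))

section ExpSeries

variable {ι : Type*} {a c : ι → ℂ} {r : ℝ}

lemma norm_mul_cexp_le_of_mem_ball (i : ι) {z : ℂ} (hz : z ∈ Metric.ball (0 : ℂ) r) :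
    ‖c i * cexp (a i * z)‖ ≤ ‖c i‖ * Real.exp (‖a i‖ * r) := by
  rw [mem_ball_zero_iff] at hz
  rw [norm_mul]
  gcongr
  calc ‖cexp (a i * z)‖ ≤ Real.exp ‖a i * z‖ := norm_exp_le_exp_norm _
    _ ≤ Real.exp (‖a i‖ * r) := by rw [norm_mul]; gcongr

theorem differentiableOn_tsum_mul_cexp (h : Summable fun i => ‖c i‖ * Real.exp (‖a i‖ * r)) :
    DifferentiableOn ℂ (fun z => ∑' i, c i * cexp (a i * z)) (Metric.ball 0 r) :=
  differentiableOn_tsum_of_summable_norm h (fun i => by fun_prop) Metric.isOpen_ball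
    fun i _ hz => norm_mul_cexp_le_of_mem_ball i hz

theorem deriv_tsum_mul_cexp (h : Summable fun i => ‖c i‖ * Real.exp (‖a i‖ * r)) {z : ℂ}
    (hz : z ∈ Metric.ball (0 : ℂ) r) :
    deriv (fun z => ∑' i, c i * cexp (a i * z)) z = ∑' i, c i * a i * cexp (a i * z) := by
  refine ((hasSum_deriv_of_summable_norm h (fun i => by fun_prop) Metric.isOpen_ball
    (fun i _ hw => norm_mul_cexp_le_of_mem_ball i hw) hz).tsum_eq.symm.trans
    (tsum_congr fun i => ?_))
  show deriv (fun x => c i * cexp (a i * x)) z = _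
  rw [(((hasDerivAt_id' z).const_mul (a i)).cexp.const_mul (c i)).deriv]
  ring

lemma summable_norm_mul_mul_exp_half (hr : 0 < r)
    (h : Summable fun i => ‖c i‖ * Real.exp (‖a i‖ * r)) :
    Summable fun i => ‖c i * a i‖ * Real.exp (‖a i‖ * (r / 2)) := by
  refine (h.mul_left (2 / r)).of_nonneg_of_le (fun i => by positivity) fun i => ?_
  have hx : ‖a i‖ * (r / 2) ≤ Real.exp (‖a i‖ * (r / 2)) := by
    linarith [Real.add_one_le_exp (‖a i‖ * (r / 2))]
  have hexp : Real.exp (‖a i‖ * r) =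
      Real.exp (‖a i‖ * (r / 2)) * Real.exp (‖a i‖ * (r / 2)) := by
    rw [← Real.exp_add]; ring_nf
  rw [norm_mul, hexp]
  calc ‖c i‖ * ‖a i‖ * Real.exp (‖a i‖ * (r / 2))
      = 2 / r * ‖c i‖ * (‖a i‖ * (r / 2)) * Real.exp (‖a i‖ * (r / 2)) := by
        field_simp
    _ ≤ 2 / r * ‖c i‖ * Real.exp (‖a i‖ * (r / 2)) * Real.exp (‖a i‖ * (r / 2)) := by gcongr
    _ = _ := by ring

theorem iteratedDeriv_tsum_mul_cexp_zero (t : ℕ) (hr : 0 < r)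
    (h : Summable fun i => ‖c i‖ * Real.exp (‖a i‖ * r)) :
    iteratedDeriv t (fun z => ∑' i, c i * cexp (a i * z)) 0 = ∑' i, c i * a i ^ t := by
  induction t generalizing c r with
  | zero => simp
  | succ t ih =>
    have hderiv : deriv (fun z => ∑' i, c i * cexp (a i * z)) =ᶠ[nhds 0]
        fun z => ∑' i, c i * a i * cexp (a i * z) :=
      Filter.eventually_of_mem (Metric.ball_mem_nhds 0 hr) fun z hz => deriv_tsum_mul_cexp h hz
    rw [iteratedDeriv_succ', hderiv.iteratedDeriv_eq,
      ih (half_pos hr) (summable_norm_mul_mul_exp_half hr h)]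
    exact tsum_congr fun i => by ring

lemma summable_mul_pow_of_summable_norm_mul_exp (t : ℕ) (hr : 0 < r)
    (h : Summable fun i => ‖c i‖ * Real.exp (‖a i‖ * r)) :
    Summable fun i => c i * a i ^ t := by
  refine .of_norm_bounded (h.mul_left (t.factorial / r ^ t)) fun i => ?_
  have hpow := Real.pow_div_factorial_le_exp (‖a i‖ * r) (by positivity) t
  rw [norm_mul, norm_pow]
  calc ‖c i‖ * ‖a i‖ ^ t = t.factorial / r ^ t * ‖c i‖ * ((‖a i‖ * r) ^ t / t.factorial) := by
        field_simp
        ring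
    _ ≤ t.factorial / r ^ t * ‖c i‖ * Real.exp (‖a i‖ * r) := by gcongr
    _ = _ := by ring

end ExpSeries

lemma zpow_sq_mul_succ_div_two {G : Type*} [DivisionRing G] (x : G) (n : ℤ) :
    (x ^ 2) ^ (n * (n + 1) / 2) = x ^ (n * (n + 1)) := by
  rw [← zpow_natCast, ← zpow_mul, Nat.cast_ofNat,
    Int.mul_ediv_cancel' (even_iff_two_dvd.mp (Int.even_mul_succ_self n))]

section Appell

def appellCoeff (w : ℂ) (p : ℕ × ℕ) : ℂ :=
  (-1) ^ p.1 * w ^ (p.1 ^ 2 + 2 * p.1 + (2 * p.1 + 1) * p.2)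

def appellSeries (w z : ℂ) : ℂ := ∑' p : ℕ × ℕ, appellCoeff w p * z ^ (2 * p.2 + 1)

/-- The `n`-th summand of `μ(u, v; τ')` with `e^{2πiv} = w`, `e^{2πiτ'} = w²`, `e^{2πiu} = w z²`. -/
def muTerm (w z : ℂ) (n : ℤ) : ℂ :=
  (-w) ^ n * (w ^ 2) ^ (n * (n + 1) / 2) / (1 - w * z ^ 2 * (w ^ 2) ^ n)

variable {w z : ℂ}

lemma muTerm_natCast (m : ℕ) :
    muTerm w z m = (-1) ^ m * w ^ (m ^ 2 + 2 * m) / (1 - w ^ (2 * m + 1) * z ^ 2) := by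
  have hexp : ((m : ℤ) * (m + 1)) = ((m ^ 2 + m : ℕ) : ℤ) := by push_cast; ring
  rw [muTerm, zpow_sq_mul_succ_div_two, hexp, zpow_natCast, zpow_natCast, zpow_natCast, neg_pow,
    mul_assoc, ← pow_add, ← pow_mul]
  congr 2
  · ring
  · ring

lemma mul_muTerm_neg_add_one (hw : w ≠ 0) (hz : z ≠ 0) (m : ℕ) :
    z * muTerm w z (-(m + 1)) = z⁻¹ * muTerm w z⁻¹ m := by
  have hm : -((m : ℤ) + 1) = -((m + 1 : ℕ) : ℤ) := by push_cast; ring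
  have hexp : -((m + 1 : ℕ) : ℤ) * (-((m + 1 : ℕ) : ℤ) + 1) = ((m ^ 2 + m : ℕ) : ℤ) := by
    push_cast; ring
  have hden : 1 - w * z ^ 2 * ((w ^ 2) ^ (m + 1))⁻¹ =
      -(z ^ 2 / w ^ (2 * m + 1)) * (1 - w ^ (2 * m + 1) * z⁻¹ ^ 2) := by
    field_simp
    ring
  rw [muTerm, muTerm_natCast, hm, zpow_sq_mul_succ_div_two, hexp, zpow_neg, zpow_neg,
    zpow_natCast, zpow_natCast, zpow_natCast, hden]
  simp only [div_eq_mul_inv, mul_inv]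
  -- this denominator may vanish, so it is kept as an opaque factor
  generalize (1 - w ^ (2 * m + 1) * z⁻¹ ^ 2)⁻¹ = E
  rw [neg_pow, pow_succ]
  rcases neg_one_pow_eq_or ℂ m with h | h <;> rw [h] <;> field_simp <;> ring

lemma hasSum_appellCoeff_mul_pow (m : ℕ) (h : ‖w ^ (2 * m + 1) * z ^ 2‖ < 1) :
    HasSum (fun k => appellCoeff w (m, k) * z ^ (2 * k + 1)) (z * muTerm w z m) := by
  have hterm : (fun k => appellCoeff w (m, k) * z ^ (2 * k + 1)) =
      fun k => (-1) ^ m * w ^ (m ^ 2 + 2 * m) * z * (w ^ (2 * m + 1) * z ^ 2) ^ k := by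
    funext k
    simp only [appellCoeff]
    ring
  rw [hterm, muTerm_natCast, ← mul_div_assoc, mul_comm z, div_eq_mul_inv]
  exact (hasSum_geometric_of_norm_lt_one h).mul_left _

lemma summable_norm_appellCoeff_mul_pow {R : ℝ} (hR : 0 ≤ R) (hw : ‖w‖ < 1)
    (hwR : ‖w‖ * R ^ 2 < 1) :
    Summable fun p : ℕ × ℕ => ‖appellCoeff w p‖ * R ^ (2 * p.2 + 1) := by
  have hgeom := (summable_geometric_of_lt_one (norm_nonneg w) hw).mul_of_nonneg
    (summable_geometric_of_lt_one (by positivity) hwR) (fun _ => by positivity)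
    (fun _ => by positivity)
  refine (hgeom.mul_left R).of_nonneg_of_le (fun _ => by positivity) fun ⟨m, k⟩ => ?_
  have hpow : ‖w‖ ^ (m ^ 2 + 2 * m + 2 * m * k) ≤ ‖w‖ ^ m :=
    pow_le_pow_of_le_one (norm_nonneg w) hw.le (by nlinarith)
  calc ‖appellCoeff w (m, k)‖ * R ^ (2 * k + 1)
      = R * ‖w‖ ^ (m ^ 2 + 2 * m + 2 * m * k) * (‖w‖ * R ^ 2) ^ k := by
        simp only [appellCoeff, norm_mul, norm_pow, norm_neg, norm_one, one_pow, one_mul]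
        ring
    _ ≤ R * (‖w‖ ^ m * (‖w‖ * R ^ 2) ^ k) := by rw [← mul_assoc]; gcongr

theorem hasSum_mul_muTerm (hw₀ : w ≠ 0) (hz₀ : z ≠ 0) (hw : ‖w‖ < 1) (hz : ‖w‖ * ‖z‖ ^ 2 < 1)
    (hz' : ‖w‖ * ‖z⁻¹‖ ^ 2 < 1) :
    HasSum (fun n : ℤ => z * muTerm w z n) (appellSeries w z + appellSeries w z⁻¹) := by
  have hasSum_nat : ∀ {x : ℂ}, ‖w‖ * ‖x‖ ^ 2 < 1 →
      HasSum (fun m : ℕ => x * muTerm w x m) (appellSeries w x) := by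
    intro x hx
    have hsum : Summable fun p : ℕ × ℕ => appellCoeff w p * x ^ (2 * p.2 + 1) :=
      .of_norm (by simpa only [norm_mul, norm_pow] using
        summable_norm_appellCoeff_mul_pow (norm_nonneg x) hw hx)
    refine hsum.hasSum.prod_fiberwise fun m => hasSum_appellCoeff_mul_pow m ?_
    calc ‖w ^ (2 * m + 1) * x ^ 2‖ = ‖w‖ ^ (2 * m) * (‖w‖ * ‖x‖ ^ 2) := by
          rw [norm_mul, norm_pow, norm_pow, pow_succ]; ring
      _ ≤ 1 * (‖w‖ * ‖x‖ ^ 2) := by gcongr; exact pow_le_one₀ (norm_nonneg w) hw.le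
      _ < 1 := by rwa [one_mul]
  refine (hasSum_nat hz).of_nat_of_neg_add_one ?_
  simpa only [mul_muTerm_neg_add_one hw₀ hz₀] using hasSum_nat hz'

end Appell


lemma nome_ne_zero (τ : ℂ) : nome τ ≠ 0 := Complex.exp_ne_zero _

lemma nome_add (τ σ : ℂ) : nome (τ + σ) = nome τ * nome σ := by
  rw [nome, nome, nome, ← Complex.exp_add]; ring_nf

lemma nome_neg (τ : ℂ) : nome (-τ) = (nome τ)⁻¹ := by
  rw [nome, nome, ← Complex.exp_neg]; ring_nf

lemma nome_pow (τ : ℂ) (n : ℕ) : nome τ ^ n = nome (n * τ) := by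
  rw [nome, nome, ← Complex.exp_nat_mul]; ring_nf

lemma norm_nome (τ : ℂ) : ‖nome τ‖ = Real.exp (-(2 * π * τ.im)) := by
  simp [nome, Complex.norm_exp]

lemma norm_nome_lt_one {τ : ℂ} (hτ : 0 < τ.im) : ‖nome τ‖ < 1 := by
  rw [norm_nome, Real.exp_lt_one_iff]
  linarith [mul_pos Real.two_pi_pos hτ]

lemma norm_nome_pow_four_lt_one {τ : ℂ} (hτ : 0 < τ.im) : ‖nome τ ^ 4‖ < 1 := by
  rw [norm_pow]
  exact pow_lt_one₀ (norm_nonneg _) (norm_nome_lt_one hτ) (by norm_num)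

theorem jtheta_four_mul_eight_mul {τ : ℂ} (hτ : 0 < τ.im) :
    jtheta (4 * τ) (8 * τ) = -(nome τ)⁻¹ * Theta4 τ := by
  set g : ℤ → ℂ := fun m => (-1) ^ m * jacobiTheta₂_term m 0 (8 * τ) with hg
  have hshift : ∀ n : ℤ, (-1 : ℂ) ^ n * cexp (2 * π * I * (4 * τ) * ((n : ℂ) + 1 / 2)) *
      cexp (π * I * (8 * τ) * ((n : ℂ) + 1 / 2) ^ 2) = -(nome τ)⁻¹ * g (n + 1) := by
    intro n
    have hexp : cexp (2 * π * I * (4 * τ) * ((n : ℂ) + 1 / 2)) *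
        cexp (π * I * (8 * τ) * ((n : ℂ) + 1 / 2) ^ 2) =
        (nome τ)⁻¹ * jacobiTheta₂_term (n + 1) 0 (8 * τ) := by
      rw [← nome_neg, nome, jacobiTheta₂_term, ← Complex.exp_add, ← Complex.exp_add]
      push_cast
      ring_nf
    simp only [hg]
    rw [zpow_add_one₀ (by norm_num), mul_assoc, hexp]
    ring
  have heven : Function.Even g := fun m => by
    simp only [hg, jacobiTheta₂_term, zpow_neg, Int.cast_neg, neg_sq, mul_zero, ← inv_zpow,
      inv_neg, inv_one]
  have hsum : Summable g := by
    refine .of_norm ((((summable_jacobiTheta₂_term_iff 0 (8 * τ)).2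
      (by simpa using hτ)).norm).congr fun m => ?_)
    simp [hg]
  have hsucc : ∀ n : ℕ, g (n + 1) = (-1) ^ (n + 1) * nome τ ^ (4 * (n + 1) ^ 2) := by
    intro n
    simp only [hg]
    rw [nome_pow, nome, jacobiTheta₂_term]
    push_cast
    rw [zpow_add_one₀ (by norm_num), zpow_natCast, pow_succ]
    ring_nf
  calc jtheta (4 * τ) (8 * τ) = ∑' n : ℤ, -(nome τ)⁻¹ * g (n + 1) := tsum_congr hshift
    _ = -(nome τ)⁻¹ * ∑' m : ℤ, g m := by
      rw [tsum_mul_left, ← (Equiv.addRight 1).tsum_eq g]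
      rfl
    _ = -(nome τ)⁻¹ * Theta4 τ := by
      rw [tsum_int_eq_zero_add_two_mul_tsum_pnat heven hsum,
        tsum_pnat_eq_tsum_succ (f := fun n : ℕ => g n), Theta4]
      simp only [Nat.cast_add, Nat.cast_one, hsucc, nsmul_eq_mul]
      simp [hg, jacobiTheta₂_term]

lemma mu_eq_tsum_muTerm (τ ω : ℂ) :
    mu (4 * τ + 2 * ω) (4 * τ) (8 * τ) =
      nome τ ^ 2 * nome ω / jtheta (4 * τ) (8 * τ) *
        ∑' n : ℤ, muTerm (nome τ ^ 4) (nome ω) n := by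
  have hu : cexp (π * I * (4 * τ + 2 * ω)) = nome τ ^ 2 * nome ω := by
    rw [nome_pow, ← nome_add, nome]; push_cast; ring_nf
  have hv : cexp (2 * π * I * (4 * τ)) = nome τ ^ 4 := by rw [nome_pow, nome]; push_cast; ring_nf
  have hτ' : nome (8 * τ) = (nome τ ^ 4) ^ 2 := by rw [← pow_mul, nome_pow]; push_cast; ring_nf
  have hu' : cexp (2 * π * I * (4 * τ + 2 * ω)) = nome τ ^ 4 * nome ω ^ 2 := by
    rw [nome_pow, nome_pow, ← nome_add, nome]; push_cast; ring_nf
  rw [mu, hu, hv, hτ', hu']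
  rfl

lemma norm_nome_pow_four_mul_sq_lt_one {τ ω : ℂ} (hω : ‖ω‖ < τ.im) :
    ‖nome τ ^ 4‖ * ‖nome ω‖ ^ 2 < 1 := by
  rw [norm_pow, norm_nome, norm_nome, ← Real.exp_nat_mul, ← Real.exp_nat_mul, ← Real.exp_add,
    Real.exp_lt_one_iff]
  have him : 0 ≤ ω.im + ‖ω‖ := by linarith [(abs_le.mp (abs_im_le_norm ω)).1]
  push_cast
  nlinarith [mul_pos Real.pi_pos (sub_pos.2 hω), mul_nonneg Real.pi_pos.le him,
    mul_nonneg Real.pi_pos.le (norm_nonneg ω)]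

theorem mu_eq_appellSeries {τ ω : ℂ} (hτ : 0 < τ.im) (hω : ‖ω‖ < τ.im) :
    mu (4 * τ + 2 * ω) (4 * τ) (8 * τ) = -(nome τ ^ 3 / Theta4 τ) *
      (appellSeries (nome τ ^ 4) (nome ω) + appellSeries (nome τ ^ 4) (nome (-ω))) := by
  have hsum := hasSum_mul_muTerm (pow_ne_zero 4 (nome_ne_zero τ)) (nome_ne_zero ω)
    (norm_nome_pow_four_lt_one hτ) (norm_nome_pow_four_mul_sq_lt_one hω)
    (by rw [← nome_neg]; exact norm_nome_pow_four_mul_sq_lt_one (by rwa [norm_neg]))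
  rw [mu_eq_tsum_muTerm, jtheta_four_mul_eight_mul hτ, nome_neg, ← hsum.tsum_eq, tsum_mul_left]
  simp only [div_eq_mul_inv, mul_inv, inv_neg, inv_inv]
  ring

lemma appellSeries_nome (w ω : ℂ) :
    appellSeries w (nome ω) =
      ∑' p : ℕ × ℕ, appellCoeff w p * cexp (2 * π * I * (2 * p.2 + 1) * ω) := by
  refine tsum_congr fun p => ?_
  rw [nome_pow, nome]
  push_cast
  ring_nf

lemma summable_norm_appellCoeff_mul_exp {τ : ℂ} (hτ : 0 < τ.im) :
    Summable fun p : ℕ × ℕ =>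
      ‖appellCoeff (nome τ ^ 4) p‖ * Real.exp (‖2 * π * I * (2 * p.2 + 1)‖ * τ.im) := by
  have hR : ‖nome τ ^ 4‖ * Real.exp (2 * π * τ.im) ^ 2 < 1 := by
    rw [norm_pow, norm_nome, ← Real.exp_nat_mul, ← Real.exp_nat_mul, ← Real.exp_add,
      Real.exp_lt_one_iff]
    push_cast
    nlinarith [Real.pi_pos]
  refine (summable_norm_appellCoeff_mul_pow (Real.exp_pos _).le (norm_nome_pow_four_lt_one hτ)
    hR).congr fun p => ?_
  rw [← Real.exp_nat_mul]
  congr 2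
  have hnorm : ‖(2 * p.2 + 1 : ℂ)‖ = 2 * p.2 + 1 := by
    exact_mod_cast Complex.norm_natCast (2 * p.2 + 1)
  rw [norm_mul, norm_mul, norm_mul, hnorm, Complex.norm_ofNat, Complex.norm_real, norm_I,
    Real.norm_of_nonneg Real.pi_pos.le]
  push_cast
  ring

lemma Fser_eq_tsum_appellCoeff (t : ℕ) (x : ℂ)
    (hs : Summable fun p : ℕ × ℕ => appellCoeff (x ^ 4) p * (2 * p.2 + 1) ^ t) :
    Fser t x = -x ^ 3 * ∑' p : ℕ × ℕ, appellCoeff (x ^ 4) p * (2 * p.2 + 1) ^ t := by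
  have hterm : ∀ β j : ℕ, (-1 : ℂ) ^ (β + 1 + j + β) * (2 * (β : ℂ) + 1) ^ t *
      x ^ (4 * (β + 1 + j) ^ 2 - (2 * β + 1) ^ 2) =
      -x ^ 3 * (appellCoeff (x ^ 4) (j, β) * (2 * β + 1) ^ t) := by
    intro β j
    have hsign : (-1 : ℂ) ^ (β + 1 + j + β) = -(-1) ^ j := by
      rw [show β + 1 + j + β = 2 * β + 1 + j by ring, pow_add, pow_succ, pow_mul]
      norm_num
    have hexp : 4 * (β + 1 + j) ^ 2 - (2 * β + 1) ^ 2 =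
        3 + 4 * (j ^ 2 + 2 * j + (2 * j + 1) * β) :=
      Nat.sub_eq_of_eq_add (by ring)
    rw [hsign, hexp, pow_add, pow_mul, appellCoeff]
    ring
  simp_rw [Fser, hterm, tsum_mul_left]
  rw [hs.tsum_prod,
    Summable.tsum_comm (f := fun j β => appellCoeff (x ^ 4) (j, β) * (2 * β + 1) ^ t) hs]

/-- Theorem (paper Thm 7.1, first identity): for even `t ≥ 0` and `τ ∈ ℍ`,
`ℱ_t(q)/Θ₄(τ) = ½ D_ω^t μ(4τ+2ω,4τ;8τ)|_{ω=0}`, where the function is holomorphic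
in `ω` near `0` and `D_ω = (2πi)⁻¹ d/dω`. -/
theorem stmt0 (t : ℕ) (ht : Even t) (τ : ℂ) (hτ : 0 < τ.im) :
    AnalyticAt ℂ (fun ω : ℂ => mu (4 * τ + 2 * ω) (4 * τ) (8 * τ)) 0 ∧
    Fser t (nome τ) / Theta4 τ =
      (1 / 2) * ((1 / (2 * (π : ℂ) * I)) ^ t *
        iteratedDeriv t (fun ω : ℂ => mu (4 * τ + 2 * ω) (4 * τ) (8 * τ)) 0) := by
  set F : ℂ → ℂ := fun ω =>
    ∑' p : ℕ × ℕ, appellCoeff (nome τ ^ 4) p * cexp (2 * π * I * (2 * p.2 + 1) * ω)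
  have hsum := summable_norm_appellCoeff_mul_exp hτ
  have hF : AnalyticAt ℂ F 0 :=
    (differentiableOn_tsum_mul_cexp hsum).analyticAt (Metric.ball_mem_nhds 0 hτ)
  have hFneg : AnalyticAt ℂ (fun ω => F (-ω)) 0 :=
    (neg_zero (G := ℂ) ▸ hF).comp analyticAt_id.neg
  have hmu : (fun ω : ℂ => mu (4 * τ + 2 * ω) (4 * τ) (8 * τ)) =ᶠ[nhds 0]
      fun ω => -(nome τ ^ 3 / Theta4 τ) * (F ω + F (-ω)) := by
    filter_upwards [Metric.ball_mem_nhds 0 hτ] with ω hω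
    rw [mu_eq_appellSeries hτ (mem_ball_zero_iff.mp hω), appellSeries_nome, appellSeries_nome]
  have hderiv : iteratedDeriv t F 0 =
      (2 * π * I) ^ t * ∑' p : ℕ × ℕ, appellCoeff (nome τ ^ 4) p * (2 * p.2 + 1) ^ t := by
    rw [iteratedDeriv_tsum_mul_cexp_zero t hτ hsum, ← tsum_mul_left]
    exact tsum_congr fun p => by rw [mul_pow]; ring
  have hs : Summable fun p : ℕ × ℕ => appellCoeff (nome τ ^ 4) p * (2 * p.2 + 1) ^ t :=
    ((summable_mul_pow_of_summable_norm_mul_exp t hτ hsum).mul_left ((2 * π * I) ^ t)⁻¹).congr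
      fun p => by rw [mul_pow (2 * π * I : ℂ)]; field_simp [two_pi_I_ne_zero]
  have hunit : (1 / (2 * π * I)) ^ t * (2 * π * I) ^ t = 1 := by
    rw [← mul_pow, one_div, inv_mul_cancel₀ two_pi_I_ne_zero, one_pow]
  refine ⟨(analyticAt_const.mul (hF.add hFneg)).congr hmu.symm, ?_⟩
  rw [hmu.iteratedDeriv_eq, iteratedDeriv_const_mul_field,
    iteratedDeriv_fun_add hF.contDiffAt hFneg.contDiffAt, iteratedDeriv_comp_neg, neg_zero,
    ht.neg_one_pow, one_smul, hderiv, Fser_eq_tsum_appellCoeff t _ hs]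
  linear_combination (nome τ ^ 3 / Theta4 τ *
    ∑' p : ℕ × ℕ, appellCoeff (nome τ ^ 4) p * (2 * p.2 + 1) ^ t) * hunit
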